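/- Let n ≥ 1, ε ∈ (0,1), and let S ∈ ℝ^{n×n} be any matrix satisfying ‖𝟏 − S‖₂ ≤ εn, where 𝟏 is the n×n all-ones matrix. Then for every positive semidefinite matrix A ∈ ℝ^{n×n} with ‖A‖∞ ≤ 1, one has ‖A − A∘S‖₂ ≤ εn. -/

import Mathlib

open Matrix BigOperators

/-- The spectral (operator) norm of a real square matrix. -/
noncomputable def specNorm {m : ℕ} (M : Matrix (Fin m) (Fin m) ℝ) : ℝ :=
  ‖LinearMap.toContinuousLinearMap (Matrix.toEuclideanLin M)‖

/-- The `n × n` all-ones matrix. -/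
def allOnes (m : ℕ) : Matrix (Fin m) (Fin m) ℝ := Matrix.of fun _ _ => 1

/-- Euclidean norm of a vector in `ℝⁿ`. -/
noncomputable def vnorm {m : ℕ} (x : Fin m → ℝ) : ℝ := Real.sqrt (∑ i, (x i) ^ 2)

/-- The (unsorted) singular values of a real square matrix: square roots of the
eigenvalues of `Aᵀ A`. -/
noncomputable def svRaw {m : ℕ} (A : Matrix (Fin m) (Fin m) ℝ) : Fin m → ℝ :=
  fun j => Real.sqrt ((show (Aᵀ * A).IsHermitian by
    simpa [Matrix.conjTranspose_eq_transpose_of_trivial] using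
      Matrix.isHermitian_conjTranspose_mul_self A).eigenvalues j)

/-- `sval A i` is the `i`-th largest singular value of `A` (1-based indexing);
it is `0` for `i = 0` and for `i > m`. -/
noncomputable def sval {m : ℕ} (A : Matrix (Fin m) (Fin m) ℝ) (i : ℕ) : ℝ :=
  if h : 1 ≤ i ∧ i ≤ m then (svRaw A ∘ Tuple.sort (svRaw A)) ⟨m - i, by omega⟩ else 0

/-- The nuclear (Schatten-1) norm of a real square matrix: the sum of its singular values. -/
noncomputable def nuclearNorm {m : ℕ} (A : Matrix (Fin m) (Fin m) ℝ) : ℝ :=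
  ∑ j, svRaw A j

/-- The smallest eigenvalue of a symmetric real matrix, via the Rayleigh quotient. -/
noncomputable def lamMin {m : ℕ} (A : Matrix (Fin m) (Fin m) ℝ) : ℝ :=
  sInf {r : ℝ | ∃ x : Fin m → ℝ, vnorm x = 1 ∧ r = x ⬝ᵥ (A *ᵥ x)}

/-!
Write `A = BᵀB` and let `bₖ` be the rows of `B`. Then
`xᵀ (A ∘ M) y = ∑ₖ (x ∘ bₖ)ᵀ M (y ∘ bₖ) ≤ ‖M‖₂ ∑ₖ ‖x ∘ bₖ‖ ‖y ∘ bₖ‖`, and by Cauchy–Schwarz the last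
sum is at most `‖x‖ ‖y‖`, because `∑ₖ ‖z ∘ bₖ‖² = ∑ᵢ zᵢ² Aᵢᵢ ≤ ‖z‖²`. Hence Schur's bound
`‖A ∘ M‖₂ ≤ ‖M‖₂` for PSD `A` with diagonal at most `1`; apply it to `M = 𝟏 − S`, noting
`A − A ∘ S = A ∘ (𝟏 − S)`.
-/

open scoped RealInnerProductSpace

variable {m : ℕ}

theorem specNorm_nonneg (M : Matrix (Fin m) (Fin m) ℝ) : 0 ≤ specNorm M := norm_nonneg _

theorem norm_toLp_eq_vnorm (x : Fin m → ℝ) : ‖WithLp.toLp 2 x‖ = vnorm x := by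
  simp [EuclideanSpace.norm_eq, vnorm]

theorem vnorm_nonneg (x : Fin m → ℝ) : 0 ≤ vnorm x := Real.sqrt_nonneg _

theorem vnorm_sq (x : Fin m → ℝ) : vnorm x ^ 2 = ∑ i, x i ^ 2 :=
  Real.sq_sqrt (Finset.sum_nonneg fun _ _ => sq_nonneg _)

theorem inner_toLp_toEuclideanLin (M : Matrix (Fin m) (Fin m) ℝ) (x y : Fin m → ℝ) :
    ⟪LinearMap.toContinuousLinearMap (toEuclideanLin M) (WithLp.toLp 2 y), WithLp.toLp 2 x⟫ =
      x ⬝ᵥ M *ᵥ y := by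
  simp [EuclideanSpace.inner_eq_star_dotProduct]

theorem dotProduct_mulVec_le_specNorm (M : Matrix (Fin m) (Fin m) ℝ) (x y : Fin m → ℝ) :
    x ⬝ᵥ M *ᵥ y ≤ specNorm M * (vnorm x * vnorm y) := by
  set T := LinearMap.toContinuousLinearMap (toEuclideanLin M)
  rw [← inner_toLp_toEuclideanLin, ← norm_toLp_eq_vnorm, ← norm_toLp_eq_vnorm]
  calc ⟪T (WithLp.toLp 2 y), WithLp.toLp 2 x⟫ ≤ ‖T (WithLp.toLp 2 y)‖ * ‖WithLp.toLp 2 x‖ :=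
        real_inner_le_norm _ _
    _ ≤ ‖T‖ * ‖WithLp.toLp 2 y‖ * ‖WithLp.toLp 2 x‖ := by gcongr; exact T.le_opNorm _
    _ = specNorm M * (‖WithLp.toLp 2 x‖ * ‖WithLp.toLp 2 y‖) := by rw [specNorm]; ring

theorem specNorm_le_of_dotProduct_mulVec_le {M : Matrix (Fin m) (Fin m) ℝ} {c : ℝ} (hc : 0 ≤ c)
    (h : ∀ x y : Fin m → ℝ, vnorm x = 1 → vnorm y = 1 → x ⬝ᵥ M *ᵥ y ≤ c) : specNorm M ≤ c := by
  refine ContinuousLinearMap.opNorm_le_of_re_inner_le hc fun y x hy hx => ?_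
  cases x; cases y
  rw [norm_toLp_eq_vnorm] at hx hy
  simpa only [RCLike.re_to_real, inner_toLp_toEuclideanLin] using h _ _ hx hy

theorem sum_vnorm_mul_row_sq (B : Matrix (Fin m) (Fin m) ℝ) (z : Fin m → ℝ) :
    ∑ k, vnorm (z * B k) ^ 2 = ∑ i, z i ^ 2 * (Bᵀ * B) i i := by
  simp only [vnorm_sq, Pi.mul_apply, mul_apply, transpose_apply, Finset.mul_sum]
  rw [Finset.sum_comm]
  exact Finset.sum_congr rfl fun i _ => Finset.sum_congr rfl fun k _ => by ring

theorem dotProduct_hadamard_gram_mulVec (B M : Matrix (Fin m) (Fin m) ℝ) (x y : Fin m → ℝ) :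
    x ⬝ᵥ ((Bᵀ * B) ⊙ M) *ᵥ y = ∑ k, (x * B k) ⬝ᵥ M *ᵥ (y * B k) := by
  simp only [dotProduct, mulVec, hadamard_apply, mul_apply, transpose_apply, Pi.mul_apply,
    Finset.sum_mul, Finset.mul_sum]
  refine (Finset.sum_congr rfl fun i _ => Finset.sum_comm).trans (Finset.sum_comm.trans ?_)
  exact Finset.sum_congr rfl fun k _ => Finset.sum_congr rfl fun i _ =>
    Finset.sum_congr rfl fun j _ => by ring

theorem dotProduct_hadamard_gram_mulVec_le {B : Matrix (Fin m) (Fin m) ℝ}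
    (hB : ∀ i, (Bᵀ * B) i i ≤ 1) (M : Matrix (Fin m) (Fin m) ℝ) (x y : Fin m → ℝ) :
    x ⬝ᵥ ((Bᵀ * B) ⊙ M) *ᵥ y ≤ specNorm M * (vnorm x * vnorm y) := by
  have hrows (z : Fin m → ℝ) : ∑ k, vnorm (z * B k) ^ 2 ≤ vnorm z ^ 2 := by
    rw [sum_vnorm_mul_row_sq, vnorm_sq]
    exact Finset.sum_le_sum fun i _ => mul_le_of_le_one_right (sq_nonneg _) (hB i)
  have hM := specNorm_nonneg M
  calc x ⬝ᵥ ((Bᵀ * B) ⊙ M) *ᵥ y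
      = ∑ k, (x * B k) ⬝ᵥ M *ᵥ (y * B k) := dotProduct_hadamard_gram_mulVec B M x y
    _ ≤ ∑ k, specNorm M * (vnorm (x * B k) * vnorm (y * B k)) :=
        Finset.sum_le_sum fun k _ => dotProduct_mulVec_le_specNorm M _ _
    _ = specNorm M * ∑ k, vnorm (x * B k) * vnorm (y * B k) := by rw [Finset.mul_sum]
    _ ≤ specNorm M * (√(∑ k, vnorm (x * B k) ^ 2) * √(∑ k, vnorm (y * B k) ^ 2)) := by
        gcongr
        exact Real.sum_mul_le_sqrt_mul_sqrt _ _ _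
    _ ≤ specNorm M * (√(vnorm x ^ 2) * √(vnorm y ^ 2)) := by
        gcongr <;> exact hrows _
    _ = specNorm M * (vnorm x * vnorm y) := by
        rw [Real.sqrt_sq (vnorm_nonneg x), Real.sqrt_sq (vnorm_nonneg y)]

open scoped MatrixOrder in
theorem Matrix.PosSemidef.specNorm_hadamard_le {A : Matrix (Fin m) (Fin m) ℝ} (hA : A.PosSemidef)
    (hdiag : ∀ i, A i i ≤ 1) (M : Matrix (Fin m) (Fin m) ℝ) : specNorm (A ⊙ M) ≤ specNorm M := by
  obtain ⟨B, rfl⟩ := CStarAlgebra.nonneg_iff_eq_star_mul_self.mp hA.nonneg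
  rw [star_eq_conjTranspose, conjTranspose_eq_transpose_of_trivial] at hdiag ⊢
  refine specNorm_le_of_dotProduct_mulVec_le (specNorm_nonneg M) fun x y hx hy => ?_
  simpa only [hx, hy, mul_one] using dotProduct_hadamard_gram_mulVec_le hdiag M x y

theorem universal_sparsifier_psd_general
    (n : ℕ) (ε : ℝ)
    (S : Matrix (Fin n) (Fin n) ℝ)
    (hS : specNorm (allOnes n - S) ≤ ε * n) :
    ∀ A : Matrix (Fin n) (Fin n) ℝ, A.PosSemidef → (∀ i j, |A i j| ≤ 1) →
      specNorm (A - Matrix.hadamard A S) ≤ ε * n := by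
  intro A hA hbounded
  have hdiff : A - A ⊙ S = A ⊙ (allOnes n - S) := by
    ext i j
    simp [allOnes, mul_sub]
  rw [hdiff]
  exact (hA.specNorm_hadamard_le (fun i => le_of_abs_le (hbounded i i)) _).trans hS

/-- **Spectral expanders are universal sparsifiers for PSD matrices.**
If `‖𝟏 − S‖₂ ≤ ε n`, then for every PSD matrix `A` with entries bounded by 1 in
magnitude, `‖A − A ∘ S‖₂ ≤ ε n`. -/
theorem universal_sparsifier_psd
    (n : ℕ) (hn : 1 ≤ n) (ε : ℝ) (hε : ε ∈ Set.Ioo (0 : ℝ) 1)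
    (S : Matrix (Fin n) (Fin n) ℝ)
    (hS : specNorm (allOnes n - S) ≤ ε * n) :
    ∀ A : Matrix (Fin n) (Fin n) ℝ, A.PosSemidef → (∀ i j, |A i j| ≤ 1) →
      specNorm (A - Matrix.hadamard A S) ≤ ε * n :=
  universal_sparsifier_psd_general n ε S hS
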